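/- arXiv:0802.2832 — 4 statements merged into one kernel-verified Lean document; each statement's English description precedes it below -/
import Mathlib

section
/- For a multislope ski rental instance with k+1 slopes (buying costs b_0 < b_1 < ... < b_k, rental rates r_0 > r_1 > ... > r_k = 0, b_0 = 0), the optimal offline cost OPT(t) = min_i (b_i + r_i·t) decomposes as the sum of the optimal costs of k two-slope instances: OPT(t) = Σ_{i=1}^k min{b_i − b_{i−1}, (r_{i−1} − r_i)·t}. -/
/-!
Telescoping, `b i + r i * t = ∑_{l ≤ i} (b l - b (l - 1)) + ∑_{l > i} (r (l - 1) - r l) * t`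
because `b 0 = 0` and `r k = 0`. Termwise, each such cost dominates the sum of the two-slope
optima `min (b l - b (l - 1)) ((r (l - 1) - r l) * t)`. Conversely, as the breakpoints
`s l = (b l - b (l - 1)) / (r (l - 1) - r l)` increase, the stages with `s l ≤ t` (where buying
is optimal) form an initial segment `1, …, j`, and for that `j` the two sides agree termwise.
-/

open Finset

theorem Finset.sum_Ioc_sub_pred {M : Type*} [AddCommGroup M] (f : ℕ → M) {m n : ℕ}
    (h : m ≤ n) :
    ∑ l ∈ Ioc m n, (f l - f (l - 1)) = f n - f m := by
  rw [← Ico_add_one_add_one_eq_Ioc, ← sum_Ico_add', ← sum_Ico_sub f h]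
  simp only [Nat.add_sub_cancel]

section SplitCost

variable {α : Type*} [AddCommMonoid α] (x y : ℕ → α) (k : ℕ)

def splitCost (i : ℕ) : α := ∑ l ∈ Ioc 0 i, x l + ∑ l ∈ Ioc i k, y l

variable [LinearOrder α] {x y k}

theorem sum_min_le_splitCost [IsOrderedAddMonoid α] {i : ℕ} (hi : i ≤ k) :
    ∑ l ∈ Ioc 0 k, min (x l) (y l) ≤ splitCost x y k i := by
  rw [splitCost, ← sum_Ioc_consecutive _ (Nat.zero_le i) hi]
  gcongr with l _ l _
  · exact min_le_left _ _
  · exact min_le_right _ _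

theorem sum_min_eq_splitCost {i : ℕ} (hi : i ≤ k) (hx : ∀ l ∈ Ioc 0 i, x l ≤ y l)
    (hy : ∀ l ∈ Ioc i k, y l ≤ x l) :
    ∑ l ∈ Ioc 0 k, min (x l) (y l) = splitCost x y k i := by
  rw [splitCost, ← sum_Ioc_consecutive _ (Nat.zero_le i) hi]
  congr 1
  · exact sum_congr rfl fun l hl => min_eq_left (hx l hl)
  · exact sum_congr rfl fun l hl => min_eq_right (hy l hl)

theorem exists_sum_min_eq_splitCost
    (hmono : ∀ l, 0 < l → l < k → y l < x l → y (l + 1) < x (l + 1)) :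
    ∃ j ≤ k, ∑ l ∈ Ioc 0 k, min (x l) (y l) = splitCost x y k j := by
  obtain ⟨j, hjk, hx, hmax⟩ : ∃ j ≤ k, (∀ l ∈ Ioc 0 j, x l ≤ y l) ∧
      ∀ i, j < i → i ≤ k → ¬∀ l ∈ Ioc 0 i, x l ≤ y l :=
    let P := fun i : ℕ => ∀ l ∈ Ioc (0 : ℕ) i, x l ≤ y l
    ⟨Nat.findGreatest P k, Nat.findGreatest_le k,
      Nat.findGreatest_spec (P := P) (Nat.zero_le k) fun l hl => by simp at hl,
      fun _ => Nat.findGreatest_is_greatest⟩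
  have hy_succ (hj : j < k) : y (j + 1) < x (j + 1) := by
    have hnot := hmax (j + 1) (Nat.lt_succ_self j) hj
    push Not at hnot
    obtain ⟨l, hl, hlt⟩ := hnot
    obtain rfl : l = j + 1 := by
      by_contra hne
      exact hlt.not_ge (hx l (by simp at hl ⊢; omega))
    exact hlt
  refine ⟨j, hjk, sum_min_eq_splitCost hjk hx fun l hl => (?_ : y l < x l).le⟩
  obtain ⟨hjl, hlk⟩ := mem_Ioc.mp hl
  clear hl
  induction l, hjl using Nat.le_induction with
  | base => exact hy_succ hlk
  | succ l hjl ih => exact hmono l (by omega) hlk (ih (by omega))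

theorem inf'_splitCost_eq_sum_min [IsOrderedAddMonoid α]
    (hmono : ∀ l, 0 < l → l < k → y l < x l → y (l + 1) < x (l + 1)) :
    (range (k + 1)).inf' nonempty_range_add_one (splitCost x y k)
      = ∑ l ∈ Ioc 0 k, min (x l) (y l) := by
  obtain ⟨j, hjk, hj⟩ := exists_sum_min_eq_splitCost hmono
  refine le_antisymm (hj ▸ inf'_le _ (mem_range.mpr (Nat.lt_succ_of_le hjk))) ?_
  exact le_inf' _ _ fun i hi => sum_min_le_splitCost (Nat.lt_succ_iff.mp (mem_range.mp hi))

end SplitCost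

theorem mul_lt_of_mul_lt_of_div_lt_div {K : Type*} [Field K] [LinearOrder K]
    [IsStrictOrderedRing K] {a₁ a₂ d₁ d₂ t : K} (hd₁ : 0 < d₁) (hd₂ : 0 < d₂)
    (h : a₁ / d₁ < a₂ / d₂) (ht : d₁ * t < a₁) :
    d₂ * t < a₂ :=
  (lt_div_iff₀' hd₂).mp (((lt_div_iff₀' hd₁).mpr ht).trans h)

theorem add_mul_eq_splitCost {R : Type*} [CommRing R] {b r : ℕ → R} {k i : ℕ}
    (hb0 : b 0 = 0) (hrk : r k = 0) (hi : i ≤ k) (t : R) :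
    b i + r i * t = splitCost (fun l => b l - b (l - 1)) (fun l => (r (l - 1) - r l) * t) k i := by
  have hr := sum_Ioc_sub_pred (-r) hi
  simp only [Pi.neg_apply, neg_sub_neg] at hr
  rw [splitCost, sum_Ioc_sub_pred b (Nat.zero_le i), ← sum_mul, hr, hb0, hrk]
  ring

/-- Decomposition of the optimal offline multislope cost into `k` two-slope optima. -/
theorem multislope_opt_decomposition (k : ℕ) (b r : ℕ → ℝ)
    (hb0 : b 0 = 0) (hrk : r k = 0)
    (hr : ∀ i < k, r (i + 1) < r i)
    (hs : ∀ i, 1 ≤ i → i < k →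
      (b i - b (i - 1)) / (r (i - 1) - r i) < (b (i + 1) - b i) / (r i - r (i + 1)))
    (t : ℝ) :
    (Finset.range (k + 1)).inf' (by simp) (fun i => b i + r i * t)
      = ∑ i ∈ Finset.Icc 1 k, min (b i - b (i - 1)) ((r (i - 1) - r i) * t) := by
  have hrate_pos (l : ℕ) (hl : 0 < l) (hlk : l ≤ k) : 0 < r (l - 1) - r l := by
    have := hr (l - 1) (by omega)
    rw [Nat.sub_add_cancel hl] at this
    linarith
  rw [inf'_congr _ rfl fun i hi =>
      add_mul_eq_splitCost hb0 hrk (Nat.lt_succ_iff.mp (mem_range.mp hi)) t,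
    show Icc 1 k = Ioc 0 k from Icc_add_one_left_eq_Ioc 0 k]
  refine inf'_splitCost_eq_sum_min fun l hl hlk hlt => ?_
  simpa using mul_lt_of_mul_lt_of_div_lt_div (hrate_pos l hl hlk.le)
    (hrate_pos (l + 1) l.succ_pos hlk) (by simpa using hs l hl hlk) (by simpa [mul_comm] using hlt)
end

section
/- The combined profile p̂ satisfies X_{p̂}(t) ≤ (e/(e−1))·OPT(t) for all t ≥ 0, where X_{p̂}(t) = B_{p̂}(t) + ∫_0^t R_{p̂}(z) dz is the total expected cost, given that each two-slope profile p^i is e/(e−1)-competitive, i.e., X_{p^i}(t) ≤ (e/(e−1))·min{b_i − b_{i−1}, (r_{i−1} − r_i)·t} for all t. -/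
/-!
With `q 0 = 1` and `q (k + 1) = 0`, the combined profile puts weight `q i - q (i + 1)` on slope `i`,
so summation by parts turns `B_p̂` and `R_p̂` into the sums of `B_{p^i}` and `R_{p^i}` over the
two-slope profiles. Each `X_{p^i}(t)` is at most `e/(e-1) · min (b i - b (i-1)) ((r (i-1) - r i) t)`,
and splitting the sum of these minima at any `j`, taking the first argument below `j` and the
second one above, bounds it by `b j + r j t`.
-/

open Finset

theorem sum_combined_weight_mul (q c : ℕ → ℝ) {k : ℕ} (hk : 1 ≤ k) :
    ∑ i ∈ range (k + 1),
      (if i = 0 then 1 - q 1 else if i = k then q k else q i - q (i + 1)) * c i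
      = c 0 + ∑ i ∈ range k, q (i + 1) * (c (i + 1) - c i) := by
  obtain ⟨n, rfl⟩ : ∃ n, k = n + 1 := ⟨k - 1, by omega⟩
  have hmid : ∑ i ∈ range n,
      (if i + 1 = 0 then 1 - q 1 else if i + 1 = n + 1 then q (n + 1)
        else q (i + 1) - q (i + 1 + 1)) * c (i + 1)
      = ∑ i ∈ range n, q (i + 1) * (c (i + 1) - c i)
        + ∑ i ∈ range n, (q (i + 1) * c i - q (i + 1 + 1) * c (i + 1)) := by
    rw [← sum_add_distrib]
    refine sum_congr rfl fun i hi => ?_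
    rw [if_neg (by omega), if_neg (by have := mem_range.1 hi; omega)]
    ring
  rw [sum_range_succ, sum_range_succ', hmid, sum_range_sub' (fun i => q (i + 1) * c i),
    sum_range_succ]
  simp only [if_pos, if_neg (Nat.succ_ne_zero n)]
  ring

theorem sum_combined_weight_mul_of_first_eq_zero (q c : ℕ → ℝ) {k : ℕ} (hk : 1 ≤ k)
    (hc : c 0 = 0) :
    ∑ i ∈ range (k + 1),
      (if i = 0 then 1 - q 1 else if i = k then q k else q i - q (i + 1)) * c i
      = ∑ i ∈ range k, q (i + 1) * (c (i + 1) - c i) := by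
  rw [sum_combined_weight_mul q c hk, hc, zero_add]

theorem sum_combined_weight_mul_of_last_eq_zero (q c : ℕ → ℝ) {k : ℕ} (hk : 1 ≤ k)
    (hc : c k = 0) :
    ∑ i ∈ range (k + 1),
      (if i = 0 then 1 - q 1 else if i = k then q k else q i - q (i + 1)) * c i
      = ∑ i ∈ range k, (1 - q (i + 1)) * (c i - c (i + 1)) := by
  have hc0 : c 0 = ∑ i ∈ range k, (c i - c (i + 1)) := by
    rw [sum_range_sub', hc, sub_zero]
  rw [sum_combined_weight_mul q c hk, hc0, ← sum_add_distrib]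
  exact sum_congr rfl fun i _ => by ring

theorem sum_min_sub_le_of_le (b r : ℕ → ℝ) (t : ℝ) {j k : ℕ} (hjk : j ≤ k) :
    ∑ i ∈ range k, min (b (i + 1) - b i) ((r i - r (i + 1)) * t)
      ≤ (b j - b 0) + (r j - r k) * t := by
  rw [← sum_range_add_sum_Ico _ hjk]
  gcongr
  · calc _ ≤ ∑ i ∈ range j, (b (i + 1) - b i) := sum_le_sum fun i _ => min_le_left _ _
      _ = b j - b 0 := sum_range_sub b j
  · calc _ ≤ ∑ i ∈ Ico j k, (r i - r (i + 1)) * t := sum_le_sum fun i _ => min_le_right _ _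
      _ = (r j - r k) * t := by
        rw [← sum_mul, sum_Ico_eq_sub _ hjk, sum_range_sub', sum_range_sub']
        ring

theorem combined_cost_eq_sum_two_slope_costs (k : ℕ) (hk : 1 ≤ k) (b r : ℕ → ℝ)
    (hb0 : b 0 = 0) (hrk : r k = 0) (p : ℕ → ℝ → ℝ) (hcont : ∀ i, Continuous (p i)) (t : ℝ) :
    (∑ i ∈ range (k + 1),
        (if i = 0 then 1 - p 1 t else if i = k then p k t else p i t - p (i + 1) t) * b i)
      + (∫ z in (0:ℝ)..t, ∑ i ∈ range (k + 1),
          (if i = 0 then 1 - p 1 z else if i = k then p k z else p i z - p (i + 1) z) * r i)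
      = ∑ i ∈ range k, (p (i + 1) t * (b (i + 1) - b i)
          + ∫ z in (0:ℝ)..t, (1 - p (i + 1) z) * (r i - r (i + 1))) := by
  rw [sum_combined_weight_mul_of_first_eq_zero (fun i => p i t) b hk hb0]
  simp_rw [fun z => sum_combined_weight_mul_of_last_eq_zero (fun i => p i z) r hk hrk]
  rw [intervalIntegral.integral_finsetSum, sum_add_distrib]
  exact fun i _ =>
    ((continuous_const.sub (hcont (i + 1))).mul continuous_const).intervalIntegrable _ _

/-- The combined profile is `e/(e-1)`-competitive for the multislope instance,
given that each two-slope profile is `e/(e-1)`-competitive. -/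
theorem combined_profile_competitive (k : ℕ) (hk : 1 ≤ k) (b r : ℕ → ℝ)
    (hb0 : b 0 = 0) (hrk : r k = 0)
    (p : ℕ → ℝ → ℝ) (hcont : ∀ i, Continuous (p i))
    (hcomp : ∀ i, 1 ≤ i → i ≤ k → ∀ t, 0 ≤ t →
      p i t * (b i - b (i - 1)) + (∫ z in (0:ℝ)..t, (1 - p i z) * (r (i - 1) - r i))
        ≤ (Real.exp 1 / (Real.exp 1 - 1)) * min (b i - b (i - 1)) ((r (i - 1) - r i) * t))
    (t : ℝ) (ht : 0 ≤ t) :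
    (∑ i ∈ Finset.range (k + 1),
        (if i = 0 then 1 - p 1 t else if i = k then p k t else p i t - p (i + 1) t) * b i)
      + (∫ z in (0:ℝ)..t, ∑ i ∈ Finset.range (k + 1),
          (if i = 0 then 1 - p 1 z else if i = k then p k z else p i z - p (i + 1) z) * r i)
      ≤ (Real.exp 1 / (Real.exp 1 - 1)) *
          (Finset.range (k + 1)).inf' (by simp) (fun i => b i + r i * t) := by
  have hρ : 0 ≤ Real.exp 1 / (Real.exp 1 - 1) :=
    div_nonneg (Real.exp_nonneg 1) (sub_nonneg.2 (Real.one_le_exp zero_le_one))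
  rw [combined_cost_eq_sum_two_slope_costs k hk b r hb0 hrk p hcont t]
  calc _ ≤ ∑ i ∈ range k, Real.exp 1 / (Real.exp 1 - 1) *
          min (b (i + 1) - b i) ((r i - r (i + 1)) * t) :=
        sum_le_sum fun i hi => by simpa using hcomp (i + 1) (by omega) (mem_range.1 hi) t ht
    _ = Real.exp 1 / (Real.exp 1 - 1) *
          ∑ i ∈ range k, min (b (i + 1) - b i) ((r i - r (i + 1)) * t) := (mul_sum ..).symm
    _ ≤ _ := mul_le_mul_of_nonneg_left (le_inf' _ _ fun j hj => by
        simpa [hb0, hrk] using sum_min_sub_le_of_le b r t (Nat.lt_succ_iff.1 (mem_range.1 hj))) hρ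
end

section
/- Let i_1 < i_2 < i_3 be three slope indices of a multislope instance with b_{i_1} < b_{i_2} < b_{i_3} and r_{i_1} > r_{i_2} > r_{i_3}, and suppose the intersection time of slopes i_1 and i_2 is strictly smaller than that of slopes i_2 and i_3, i.e., (b_{i_2} − b_{i_1})/(r_{i_1} − r_{i_2}) < (b_{i_3} − b_{i_2})/(r_{i_2} − r_{i_3}). Then for any Δ > 0, shifting probability mass Δ/(b_{i_2} − b_{i_1}) from slope i_1 and Δ/(b_{i_3} − b_{i_2}) from slope i_3 onto slope i_2 preserves the expected buying cost Σ p_i b_i and strictly decreases the expected rental rate Σ p_i r_i, the decrease being Δ·((r_{i_1} − r_{i_2})/(b_{i_2} − b_{i_1}) − (r_{i_2} − r_{i_3})/(b_{i_3} − b_{i_2})) > 0. -/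
/-!
Moving `Δ / (b i₂ - b i₁)` from `i₁` and `Δ / (b i₃ - b i₂)` from `i₃` onto `i₂` changes
`∑ p j * f j` by `Δ / (b i₂ - b i₁) * (f i₂ - f i₁) - Δ / (b i₃ - b i₂) * (f i₃ - f i₂)`.
For `f = 1` and `f = b` this vanishes, and for `f = r` it is `-Δ` times the difference of the
slopes `(r i₁ - r i₂) / (b i₂ - b i₁)` and `(r i₂ - r i₃) / (b i₃ - b i₂)`; these are the
reciprocals of the intersection times, so the ordering of the intersection times makes it negative.
-/

open Finset

section ThreePointShift

variable {ι R : Type*} [DecidableEq ι] [CommRing R]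

def threePointShift (p : ι → R) (i₁ i₂ i₃ : ι) (d₁ d₂ : R) : ι → R := fun j =>
  if j = i₁ then p i₁ - d₁
  else if j = i₂ then p i₂ + d₁ + d₂
  else if j = i₃ then p i₃ - d₂
  else p j

theorem sum_threePointShift_mul_sub_sum_mul (p f : ι → R) {i₁ i₂ i₃ : ι} (d₁ d₂ : R)
    {t : Finset ι} (h₁ : i₁ ∈ t) (h₂ : i₂ ∈ t) (h₃ : i₃ ∈ t)
    (h12 : i₁ ≠ i₂) (h13 : i₁ ≠ i₃) (h23 : i₂ ≠ i₃) :
    ∑ j ∈ t, threePointShift p i₁ i₂ i₃ d₁ d₂ j * f j - ∑ j ∈ t, p j * f j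
      = d₁ * (f i₂ - f i₁) - d₂ * (f i₃ - f i₂) := by
  have hsub : {i₁, i₂, i₃} ⊆ t := by
    simp only [insert_subset_iff, singleton_subset_iff]
    exact ⟨h₁, h₂, h₃⟩
  have hoff : ∀ j ∈ t, j ∉ ({i₁, i₂, i₃} : Finset ι) →
      threePointShift p i₁ i₂ i₃ d₁ d₂ j * f j - p j * f j = 0 := by
    intro j _ hj
    simp only [mem_insert, mem_singleton, not_or] at hj
    simp [threePointShift, hj.1, hj.2.1, hj.2.2]
  rw [← sum_sub_distrib, ← sum_subset hsub hoff, sum_insert (by simp [h12, h13]),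
    sum_insert (by simp [h23]), sum_singleton]
  simp only [threePointShift, if_pos, if_neg h12.symm, if_neg h13.symm, if_neg h23.symm]
  ring

end ThreePointShift

theorem probability_shift_decreases_rent_general (k : ℕ) (b r : ℕ → ℝ) (p : ℕ → ℝ)
    (i₁ i₂ i₃ : ℕ) (h12 : i₁ < i₂) (h23 : i₂ < i₃) (h3k : i₃ ≤ k)
    (hb12 : b i₁ < b i₂) (hb23 : b i₂ < b i₃)
    (hr12 : r i₂ < r i₁) (hr23 : r i₃ < r i₂)
    (hs : (b i₂ - b i₁) / (r i₁ - r i₂) < (b i₃ - b i₂) / (r i₂ - r i₃))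
    (Δ : ℝ) (hΔ : 0 < Δ)
    (p' : ℕ → ℝ)
    (hp' : ∀ j, p' j =
      if j = i₁ then p i₁ - Δ / (b i₂ - b i₁)
      else if j = i₂ then p i₂ + Δ / (b i₂ - b i₁) + Δ / (b i₃ - b i₂)
      else if j = i₃ then p i₃ - Δ / (b i₃ - b i₂)
      else p j) :
    (∑ i ∈ Finset.range (k + 1), p' i = ∑ i ∈ Finset.range (k + 1), p i) ∧
      (∑ i ∈ Finset.range (k + 1), p' i * b i = ∑ i ∈ Finset.range (k + 1), p i * b i) ∧
      (∑ i ∈ Finset.range (k + 1), p i * r i - ∑ i ∈ Finset.range (k + 1), p' i * r i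
        = Δ * ((r i₁ - r i₂) / (b i₂ - b i₁) - (r i₂ - r i₃) / (b i₃ - b i₂))) ∧
      0 < Δ * ((r i₁ - r i₂) / (b i₂ - b i₁) - (r i₂ - r i₃) / (b i₃ - b i₂)) := by
  obtain rfl : p' = threePointShift p i₁ i₂ i₃ (Δ / (b i₂ - b i₁)) (Δ / (b i₃ - b i₂)) :=
    funext hp'
  have key (f : ℕ → ℝ) := sum_threePointShift_mul_sub_sum_mul p f
    (Δ / (b i₂ - b i₁)) (Δ / (b i₃ - b i₂))
    (mem_range.mpr (by omega : i₁ < k + 1)) (mem_range.mpr (by omega : i₂ < k + 1))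
    (mem_range.mpr (by omega : i₃ < k + 1)) h12.ne (h12.trans h23).ne h23.ne
  have hb₁ : b i₂ - b i₁ ≠ 0 := (sub_pos.mpr hb12).ne'
  have hb₂ : b i₃ - b i₂ ≠ 0 := (sub_pos.mpr hb23).ne'
  have hslope : (r i₂ - r i₃) / (b i₃ - b i₂) < (r i₁ - r i₂) / (b i₂ - b i₁) := by
    have := (inv_lt_inv₀ (div_pos (sub_pos.mpr hb23) (sub_pos.mpr hr23))
      (div_pos (sub_pos.mpr hb12) (sub_pos.mpr hr12))).mpr hs
    rwa [inv_div, inv_div] at this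
  refine ⟨?_, ?_, by linear_combination -key r, mul_pos hΔ (sub_pos.mpr hslope)⟩
  · simpa [sub_eq_zero] using key 1
  · rw [← sub_eq_zero, key b, div_mul_cancel₀ _ hb₁, div_mul_cancel₀ _ hb₂, sub_self]

/-- Shifting probability mass from two outer slopes onto a middle slope keeps
the total mass and buying cost unchanged and strictly decreases the rental rate. -/
theorem probability_shift_decreases_rent (k : ℕ) (b r : ℕ → ℝ) (p : ℕ → ℝ)
    (i₁ i₂ i₃ : ℕ) (h12 : i₁ < i₂) (h23 : i₂ < i₃) (h3k : i₃ ≤ k)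
    (hb12 : b i₁ < b i₂) (hb23 : b i₂ < b i₃)
    (hr12 : r i₂ < r i₁) (hr23 : r i₃ < r i₂)
    (hs : (b i₂ - b i₁) / (r i₁ - r i₂) < (b i₃ - b i₂) / (r i₂ - r i₃))
    (Δ : ℝ) (hΔ : 0 < Δ)
    (p' : ℕ → ℝ)
    (hp' : ∀ j, p' j =
      if j = i₁ then p i₁ - Δ / (b i₂ - b i₁)
      else if j = i₂ then p i₂ + Δ / (b i₂ - b i₁) + Δ / (b i₃ - b i₂)
      else if j = i₃ then p i₃ - Δ / (b i₃ - b i₂)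
      else p j)
    (hnn : ∀ j ≤ k, 0 ≤ p' j) :
    (∑ i ∈ Finset.range (k + 1), p' i = ∑ i ∈ Finset.range (k + 1), p i) ∧
      (∑ i ∈ Finset.range (k + 1), p' i * b i = ∑ i ∈ Finset.range (k + 1), p i * b i) ∧
      (∑ i ∈ Finset.range (k + 1), p i * r i - ∑ i ∈ Finset.range (k + 1), p' i * r i
        = Δ * ((r i₁ - r i₂) / (b i₂ - b i₁) - (r i₂ - r i₃) / (b i₃ - b i₂))) ∧
      0 < Δ * ((r i₁ - r i₂) / (b i₂ - b i₁) - (r i₂ - r i₃) / (b i₃ - b i₂)) :=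
  probability_shift_decreases_rent_general k b r p i₁ i₂ i₃ h12 h23 h3k hb12 hb23 hr12 hr23 hs Δ hΔ
    p' hp'
end

section
/- Given a probability distribution over slopes with total buying cost B, the 'prudent' redistribution that places all mass on the two consecutive slopes best and next (where b_best ≤ B ≤ b_next, next = best or best+1) with weights (b_next − B)/(b_next − b_best) on best and (B − b_best)/(b_next − b_best) on next, is a probability distribution with the same expected buying cost B, and its expected rental rate is at most that of the original distribution. -/
/-!
Interpolating the points `(b i, r i)` piecewise linearly gives a convex function, by the slope
condition `hconc`. Hence the chord through two consecutive points `(b j, r j)`, `(b (j+1), r (j+1))`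
is a supporting line: every point lies on or above it. Averaging the affine minorant against `p`
gives `∑ p i * r i ≥` its value at the mean `B`, and the prudent distribution, supported on the
chord's two endpoints, attains exactly this value.
-/

open Finset

lemma affine_le_sum_mul {ι : Type*} {s : Finset ι} {p x y : ι → ℝ} {x₀ y₀ m B : ℝ}
    (hp0 : ∀ i ∈ s, 0 ≤ p i) (hp1 : ∑ i ∈ s, p i = 1) (hB : ∑ i ∈ s, p i * x i = B)
    (h : ∀ i ∈ s, y₀ + m * (x i - x₀) ≤ y i) :
    y₀ + m * (B - x₀) ≤ ∑ i ∈ s, p i * y i := by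
  calc y₀ + m * (B - x₀) = ∑ i ∈ s, p i * (y₀ + m * (x i - x₀)) := by
        simp only [mul_add, mul_sub, sum_add_distrib, sum_sub_distrib, ← sum_mul,
          mul_left_comm _ m, ← mul_sum, hp1, hB]
        ring
    _ ≤ ∑ i ∈ s, p i * y i := sum_le_sum fun i hi => mul_le_mul_of_nonneg_left (h i hi) (hp0 i hi)

noncomputable def chordSlope (b r : ℕ → ℝ) (j : ℕ) : ℝ := (r (j + 1) - r j) / (b (j + 1) - b j)

lemma chordSlope_mul {b r : ℕ → ℝ} {j : ℕ} (h : b j < b (j + 1)) :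
    chordSlope b r j * (b (j + 1) - b j) = r (j + 1) - r j :=
  div_mul_cancel₀ _ (sub_pos.2 h).ne'

section Convexity

variable {k : ℕ} {b r : ℕ → ℝ}

lemma cross_mul_lt_of_slope_lt (hb : ∀ i < k, b i < b (i + 1))
    (hconc : ∀ i j l, i < j → j < l → l ≤ k →
      (r j - r l) / (b l - b j) < (r i - r j) / (b j - b i))
    {i j l : ℕ} (hij : i < j) (hjl : j < l) (hl : l ≤ k) :
    (r j - r l) * (b j - b i) < (r i - r j) * (b l - b j) := by
  have hmono := strictMonoOn_Iic_of_lt_succ hb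
  have hbij : b i < b j := hmono (Set.mem_Iic.2 (by omega)) (Set.mem_Iic.2 (by omega)) hij
  have hbjl : b j < b l := hmono (Set.mem_Iic.2 (by omega)) (Set.mem_Iic.2 hl) hjl
  exact (div_lt_div_iff₀ (sub_pos.2 hbjl) (sub_pos.2 hbij)).1 (hconc i j l hij hjl hl)

lemma chord_le (hb : ∀ i < k, b i < b (i + 1))
    (hconc : ∀ i j l, i < j → j < l → l ≤ k →
      (r j - r l) / (b l - b j) < (r i - r j) / (b j - b i))
    {i j : ℕ} (hj : j < k) (hi : i ≤ k) :
    r j + chordSlope b r j * (b i - b j) ≤ r i := by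
  have hd := sub_pos.2 (hb j hj)
  have hs := chordSlope_mul (r := r) (hb j hj)
  suffices (r (j + 1) - r j) * (b i - b j) ≤ (r i - r j) * (b (j + 1) - b j) by
    rw [← hs] at this
    exact le_of_mul_le_mul_right (by linear_combination this) hd
  rcases lt_trichotomy i j with hij | rfl | hji
  · linear_combination (cross_mul_lt_of_slope_lt hb hconc hij (lt_add_one j) hj).le
  · simp
  · rcases (Nat.succ_le_of_lt hji).eq_or_lt with rfl | hji'
    · linarith
    · linear_combination (cross_mul_lt_of_slope_lt hb hconc (lt_add_one j) hji' hi).le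

lemma exists_supporting_line (hb : ∀ i < k, b i < b (i + 1))
    (hconc : ∀ i j l, i < j → j < l → l ≤ k →
      (r j - r l) / (b l - b j) < (r i - r j) / (b j - b i))
    {j : ℕ} (hj : j ≤ k) : ∃ m, ∀ i ≤ k, r j + m * (b i - b j) ≤ r i := by
  rcases hj.lt_or_eq with hjk | rfl
  · exact ⟨_, fun i hi => chord_le hb hconc hjk hi⟩
  cases j with
  | zero => exact ⟨0, fun i hi => by obtain rfl : i = 0 := (by omega); simp⟩
  | succ j =>
    refine ⟨chordSlope b r j, fun i hi => ?_⟩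
    have hs := chordSlope_mul (r := r) (hb j (lt_add_one j))
    linarith [chord_le hb hconc (lt_add_one j) hi]

end Convexity

theorem prudent_redistribution_optimal_general (k : ℕ) (b r : ℕ → ℝ)
    (hb : ∀ i < k, b i < b (i + 1))
    (hconc : ∀ i j l, i < j → j < l → l ≤ k →
      (r j - r l) / (b l - b j) < (r i - r j) / (b j - b i))
    (p : ℕ → ℝ) (hp0 : ∀ i ≤ k, 0 ≤ p i) (hp1 : ∑ i ∈ Finset.range (k + 1), p i = 1)
    (B : ℝ) (hB : ∑ i ∈ Finset.range (k + 1), p i * b i = B)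
    (best next : ℕ) (hnk : next ≤ k)
    (hbn : next = best ∨ next = best + 1)
    (hbB : b best ≤ B) (hBn : B ≤ b next)
    (q : ℕ → ℝ)
    (hq : ∀ i, q i =
      if best = next then (if i = best then 1 else 0)
      else if i = best then (b next - B) / (b next - b best)
      else if i = next then (B - b best) / (b next - b best)
      else 0) :
    (∀ i ≤ k, 0 ≤ q i) ∧
      (∑ i ∈ Finset.range (k + 1), q i = 1) ∧
      (∑ i ∈ Finset.range (k + 1), q i * b i = B) ∧
      (∑ i ∈ Finset.range (k + 1), q i * r i ≤ ∑ i ∈ Finset.range (k + 1), p i * r i) := by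
  have hp0' : ∀ i ∈ range (k + 1), 0 ≤ p i := fun i hi => hp0 i (mem_range_succ_iff.1 hi)
  rcases hbn with rfl | rfl
  · obtain rfl : B = b next := le_antisymm hBn hbB
    have hq' (i : ℕ) : q i = if i = next then 1 else 0 := by rw [hq, if_pos rfl]
    have hsum (f : ℕ → ℝ) : ∑ i ∈ range (k + 1), q i * f i = f next := by
      rw [sum_eq_single_of_mem next (mem_range_succ_iff.2 hnk) fun i _ hi => by simp [hq', hi]]
      simp [hq']
    obtain ⟨m, hm⟩ := exists_supporting_line hb hconc hnk
    refine ⟨fun i _ => by rw [hq']; split_ifs <;> norm_num, by simpa using hsum 1, hsum b, ?_⟩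
    simpa [hsum] using affine_le_sum_mul hp0' hp1 hB fun i hi => hm i (mem_range_succ_iff.1 hi)
  · have hd : 0 < b (best + 1) - b best := sub_pos.2 (hb best (by omega))
    have hsum (f : ℕ → ℝ) : ∑ i ∈ range (k + 1), q i * f i =
        (b (best + 1) - B) / (b (best + 1) - b best) * f best +
          (B - b best) / (b (best + 1) - b best) * f (best + 1) := by
      rw [sum_eq_add_of_mem best (best + 1) (mem_range_succ_iff.2 (by omega))
        (mem_range_succ_iff.2 hnk) (by omega)
        fun i _ hi => by simp [hq, hi.1, hi.2]]
      simp [hq]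
    refine ⟨fun i _ => ?_, ?_, ?_, ?_⟩
    · rw [hq]; split_ifs <;> positivity
    · simpa using (hsum 1).trans (by simp only [Pi.one_apply]; field_simp; ring)
    · rw [hsum]; field_simp; ring
    · calc ∑ i ∈ range (k + 1), q i * r i = r best + chordSlope b r best * (B - b best) := by
            rw [hsum, chordSlope]; field_simp; ring
        _ ≤ _ := affine_le_sum_mul hp0' hp1 hB fun i hi =>
            chord_le hb hconc (by omega) (mem_range_succ_iff.1 hi)

/-- The prudent two-point redistribution with the same mean buying budget `B`
is a probability distribution and its expected rental rate is minimal. -/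
theorem prudent_redistribution_optimal (k : ℕ) (b r : ℕ → ℝ)
    (hb : ∀ i < k, b i < b (i + 1)) (hr : ∀ i < k, r (i + 1) < r i)
    (hconc : ∀ i j l, i < j → j < l → l ≤ k →
      (r j - r l) / (b l - b j) < (r i - r j) / (b j - b i))
    (p : ℕ → ℝ) (hp0 : ∀ i ≤ k, 0 ≤ p i) (hp1 : ∑ i ∈ Finset.range (k + 1), p i = 1)
    (B : ℝ) (hB : ∑ i ∈ Finset.range (k + 1), p i * b i = B)
    (best next : ℕ) (hbk : best ≤ k) (hnk : next ≤ k)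
    (hbn : next = best ∨ next = best + 1)
    (hbB : b best ≤ B) (hBn : B ≤ b next)
    (q : ℕ → ℝ)
    (hq : ∀ i, q i =
      if best = next then (if i = best then 1 else 0)
      else if i = best then (b next - B) / (b next - b best)
      else if i = next then (B - b best) / (b next - b best)
      else 0) :
    (∀ i ≤ k, 0 ≤ q i) ∧
      (∑ i ∈ Finset.range (k + 1), q i = 1) ∧
      (∑ i ∈ Finset.range (k + 1), q i * b i = B) ∧
      (∑ i ∈ Finset.range (k + 1), q i * r i ≤ ∑ i ∈ Finset.range (k + 1), p i * r i) :=
  prudent_redistribution_optimal_general k b r hb hconc p hp0 hp1 B hB best next hnk hbn hbB hBn q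
    hq
end
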